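/- arXiv:1702.02511 — 3 statements merged into one kernel-verified Lean document; each statement's English description precedes it below -/
import Mathlib

section
/- Let $S_1,\dots,S_{n+1}$ be the spacings of $n$ i.i.d. uniform points on $[0,s]$, and let $0 < d < s$ with $n_{\min} = \lfloor s/d \rfloor$ (at most that many spacings can exceed $d$). Then the probability that all $n+1$ spacings are at most $d$ equals $p_{\mathrm{mon}} = 1 - \sum_{k=1}^{n_{\min}} (-1)^{k-1} \binom{n+1}{k} \left(1 - k\frac{d}{s}\right)^n$. -/
open MeasureTheory Finset Nat

noncomputable def unif (s : ℝ) : Measure ℝ :=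
  (ENNReal.ofReal s⁻¹) • (volume.restrict (Set.Icc 0 s))

noncomputable def iidUnif (n : ℕ) (s : ℝ) : Measure (Fin n → ℝ) :=
  Measure.pi fun _ => unif s

noncomputable def orderStat {n : ℕ} (x : Fin n → ℝ) : Fin n → ℝ :=
  x ∘ Tuple.sort x

noncomputable def slack (n : ℕ) (s : ℝ) (x : Fin n → ℝ) (i : Fin (n + 1)) : ℝ :=
  (if h : (i : ℕ) < n then orderStat x ⟨i, h⟩ else s) -
  (if h : 0 < (i : ℕ) then orderStat x ⟨(i : ℕ) - 1, by have := i.isLt; omega⟩ else 0)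

/-!
`iidUnif n s` is Lebesgue measure on `(0, s)ⁿ` scaled by `s⁻ⁿ`.
Cut `ℝⁿ` into the `n!` chambers on which `x ∘ σ` is increasing (their complement is null).
On a chamber the spacings are the gaps between the knots `0 < x (σ 0) < ⋯ < x (σ (n-1)) < s`,
and subtracting the partial sums of thresholds `c` from the sorted coordinates lowers gap `i`
by exactly `c i`. Hence the spacings exceed `c` on a set of the same volume as the set where the
spacings of `[0, s - ∑ c]` are positive, namely `(s - ∑ c)ⁿ` (or `0` if `s ≤ ∑ c`).
Inclusion–exclusion over the set `T` of spacings exceeding `d` (so `c = d · 1_T`) then gives the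
alternating sum; the terms with `#T > s / d` vanish.
-/

theorem indicator_iInter_compl_eq_sum {ι Ω : Type*} [Fintype ι] (B : ι → Set Ω) (x : Ω) :
    (⋂ i, (B i)ᶜ).indicator (1 : Ω → ℝ) x =
      ∑ T : Finset ι, (-1) ^ #T * (⋂ i ∈ T, B i).indicator 1 x := by
  classical
  have hprod : ∀ T : Finset ι, (⋂ i ∈ T, B i).indicator (1 : Ω → ℝ) x =
      ∏ i ∈ T, (B i).indicator 1 x := fun T => by
    simp [Set.indicator_apply, Finset.prod_boole]
  calc (⋂ i, (B i)ᶜ).indicator (1 : Ω → ℝ) x = ∏ i, (1 - (B i).indicator 1 x) := by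
        simp only [Set.indicator_apply, Set.mem_iInter, Set.mem_compl_iff, Pi.one_apply,
          ← Fintype.prod_boole]
        exact Finset.prod_congr rfl fun i _ => by split_ifs <;> simp
    _ = ∑ T : Finset ι, (-1) ^ #T * (⋂ i ∈ T, B i).indicator 1 x := by
        simp [Finset.prod_sub, hprod]

theorem measureReal_iInter_compl {ι Ω : Type*} [Fintype ι] [MeasurableSpace Ω] (μ : Measure Ω)
    [IsFiniteMeasure μ] {B : ι → Set Ω} (hB : ∀ i, MeasurableSet (B i)) :
    μ.real (⋂ i, (B i)ᶜ) = ∑ T : Finset ι, (-1) ^ #T * μ.real (⋂ i ∈ T, B i) := by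
  have hinter : ∀ T : Finset ι, MeasurableSet (⋂ i ∈ T, B i) := fun T =>
    .biInter T.countable_toSet fun i _ => hB i
  rw [← integral_indicator_one (.iInter fun i => (hB i).compl)]
  simp_rw [indicator_iInter_compl_eq_sum]
  rw [integral_finsetSum _ fun T _ =>
    ((integrable_indicator_iff (hinter T)).mpr (integrableOn_const ..)).const_mul _]
  simp_rw [integral_const_mul, integral_indicator_one (hinter _)]

theorem sum_range_choose_smul_truncated_pow (n : ℕ) {r : ℝ} (hr0 : 0 < r) (hr1 : r < 1) :
    ∑ k ∈ range (n + 2),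
        (n + 1).choose k • ((-1) ^ k * if k * r < 1 then (1 - k * r) ^ n else 0) =
      1 - ∑ k ∈ Icc 1 ⌊r⁻¹⌋₊, (-1) ^ (k - 1) * (n + 1).choose k * (1 - k * r) ^ n := by
  set m := ⌊r⁻¹⌋₊
  set G : ℕ → ℝ := fun k => (n + 1).choose k • ((-1) ^ k * (1 - k * r) ^ n)
  have hG : 1 - ∑ k ∈ Icc 1 m, (-1) ^ (k - 1) * (n + 1).choose k * (1 - k * r) ^ n =
      ∑ k ∈ range (m + 1), G k := by
    rw [Nat.range_succ_eq_Icc_zero, ← Finset.add_sum_Ioc_eq_sum_Icc (Nat.zero_le m),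
      sub_eq_add_neg, ← Finset.sum_neg_distrib]
    refine congrArg₂ _ (by simp [G]) (Finset.sum_congr rfl fun k hk => ?_)
    obtain ⟨j, rfl⟩ := Nat.exists_eq_add_of_le' (Finset.mem_Ioc.mp hk).1
    simp [G, pow_succ]
    ring
  have hle : ∀ k ≤ m, k * r ≤ 1 := fun k hk =>
    (le_div_iff₀ hr0).mp ((Nat.le_floor_iff (by positivity)).mp hk |>.trans_eq (one_div r).symm)
  have hgt : ∀ k, m < k → 1 < k * r := fun k hk =>
    (div_lt_iff₀ hr0).mp ((one_div r).trans_lt ((Nat.floor_lt (by positivity)).mp hk))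
  rw [hG]
  calc _ = ∑ k ∈ range (min (n + 2) (m + 1)), G k := by
        refine (Finset.sum_subset_zero_on_sdiff (Finset.range_subset_range.mpr (min_le_left _ _))
          (fun k hk => ?_) (fun k hk => ?_)).symm
        · simp only [Finset.mem_sdiff, Finset.mem_range, lt_min_iff, not_and_or, not_lt] at hk
          rw [if_neg (hgt k (by omega)).not_gt, mul_zero, smul_zero]
        · simp only [Finset.mem_range, lt_min_iff] at hk
          rcases (hle k (by omega)).lt_or_eq with hlt | heq
          · simp [G, hlt]
          · have hk2 : 2 ≤ k := by
              by_contra! h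
              interval_cases k <;> simp at heq
              linarith
            simp [G, heq, zero_pow (by omega : n ≠ 0)]
    _ = ∑ k ∈ range (m + 1), G k := by
        refine Finset.sum_subset_zero_on_sdiff (Finset.range_subset_range.mpr (min_le_right _ _))
          (fun k hk => ?_) (fun _ _ => rfl)
        simp only [Finset.mem_sdiff, Finset.mem_range, lt_min_iff, not_and_or, not_lt] at hk
        simp [G, Nat.choose_eq_zero_of_lt (by omega : n + 1 < k)]

section Spacings

variable {n : ℕ}

def knots (s : ℝ) (u : Fin n → ℝ) : Fin (n + 2) → ℝ := Fin.cons 0 (Fin.snoc u s)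

def gaps (s : ℝ) (u : Fin n → ℝ) (i : Fin (n + 1)) : ℝ :=
  knots s u i.succ - knots s u i.castSucc

theorem slack_eq_gaps (s : ℝ) (x : Fin n → ℝ) : slack n s x = gaps s (orderStat x) := by
  ext i
  cases i using Fin.cases with
  | zero => simp [slack, gaps, knots, Fin.snoc, Fin.castLT]
  | succ j => simp [slack, gaps, knots, Fin.snoc, Fin.castLT]

theorem strictMono_knots_iff_gaps_pos {s : ℝ} {u : Fin n → ℝ} :
    StrictMono (knots s u) ↔ ∀ i, 0 < gaps s u i := by
  simp [Fin.strictMono_iff_lt_succ, gaps]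

theorem strictMono_knots_iff {s : ℝ} {u : Fin n → ℝ} :
    StrictMono (knots s u) ↔ 0 < s ∧ StrictMono u ∧ ∀ j, u j ∈ Set.Ioo 0 s := by
  rw [knots, Fin.strictMono_cons, ← Fin.insertNth_last', Fin.strictMono_insertNth_iff,
    Fin.forall_fin_succ']
  simp [Fin.castSucc_lt_last, forall_and]
  tauto

theorem knots_sub (s t : ℝ) (u w : Fin n → ℝ) :
    knots (s - t) (u - w) = knots s u - knots t w := by
  ext k
  cases k using Fin.cases with
  | zero => simp [knots]
  | succ k => cases k using Fin.lastCases <;> simp [knots]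

theorem gaps_sub (s t : ℝ) (u w : Fin n → ℝ) :
    gaps (s - t) (u - w) = gaps s u - gaps t w := by
  ext i
  simp only [gaps, knots_sub, Pi.sub_apply]
  ring

def cumSum (c : Fin (n + 1) → ℝ) (r : Fin n) : ℝ := Fin.partialSum c r.castSucc.succ

theorem knots_cumSum (c : Fin (n + 1) → ℝ) :
    knots (∑ i, c i) (cumSum c) = Fin.partialSum c := by
  ext k
  cases k using Fin.cases with
  | zero => simp [knots]
  | succ k =>
    cases k using Fin.lastCases with
    | last =>
      simp only [knots, Fin.cons_succ, Fin.snoc_last, Fin.partialSum, Fin.val_succ,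
        Fin.val_last]
      rw [List.take_of_length_le (by simp), List.sum_ofFn]
    | cast r => simp [knots, cumSum]

theorem gaps_cumSum (c : Fin (n + 1) → ℝ) : gaps (∑ i, c i) (cumSum c) = c := by
  ext i
  simp [gaps, knots_cumSum, Fin.partialSum_succ]

theorem measurable_orderStat (i : Fin n) : Measurable fun x : Fin n → ℝ => orderStat x i := by
  refine measurable_of_Iic fun a => ?_
  have hcount (x : Fin n → ℝ) : orderStat x i ≤ a ↔ (i : ℕ) < #{j | x j ≤ a} := by
    rw [orderStat, ← Tuple.lt_card_le_iff_apply_le_of_monotone (Tuple.monotone_sort x),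
      ← Fintype.card_subtype, ← Fintype.card_subtype]
    exact Iff.of_eq <| congrArg _ <|
      Fintype.card_congr ((Tuple.sort x).subtypeEquiv fun _ => .rfl)
  have hmeas : Measurable fun x : Fin n → ℝ => #{j | x j ≤ a} := by
    simp_rw [Finset.card_filter]
    exact Finset.measurable_sum _ fun j _ =>
      Measurable.ite (measurableSet_le (measurable_pi_apply j) measurable_const)
        measurable_const measurable_const
  simpa [Set.preimage, hcount] using hmeas (MeasurableSet.of_discrete (s := {m | (i : ℕ) < m}))

theorem measurable_slack (s : ℝ) (i : Fin (n + 1)) :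
    Measurable fun x : Fin n → ℝ => slack n s x i := by
  unfold slack
  refine Measurable.sub ?_ ?_ <;> split_ifs <;>
    first | exact measurable_orderStat _ | exact measurable_const

def chamber (σ : Equiv.Perm (Fin n)) : Set (Fin n → ℝ) := {x | StrictMono (x ∘ σ)}

theorem measurableSet_chamber (σ : Equiv.Perm (Fin n)) : MeasurableSet (chamber σ) := by
  simp only [chamber, StrictMono, Set.ofPred_forall]
  exact .iInter fun a => .iInter fun b => .iInter fun _ =>
    measurableSet_lt (measurable_pi_apply _) (measurable_pi_apply _)

theorem injective_of_mem_chamber {σ : Equiv.Perm (Fin n)} {x : Fin n → ℝ}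
    (hx : x ∈ chamber σ) : Function.Injective x :=
  (EquivLike.injective_comp σ x).mp hx.injective

theorem pairwise_disjoint_chamber :
    Pairwise fun σ τ : Equiv.Perm (Fin n) => Disjoint (chamber σ) (chamber τ) := by
  refine fun σ τ hστ => Set.disjoint_left.mpr fun x hσ hτ => hστ ?_
  have := Tuple.unique_monotone hσ.monotone hτ.monotone
  exact Equiv.ext fun j => injective_of_mem_chamber hσ (congrFun this j)

theorem iUnion_chamber : ⋃ σ, chamber σ = {x : Fin n → ℝ | Function.Injective x} := by
  refine Set.Subset.antisymm (Set.iUnion_subset fun σ x => injective_of_mem_chamber)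
    fun x hx => Set.mem_iUnion.mpr ⟨Tuple.sort x, ?_⟩
  exact (Tuple.monotone_sort x).strictMono_of_injective (hx.comp (Tuple.sort x).injective)

theorem volume_setOf_not_injective : volume {x : Fin n → ℝ | ¬ Function.Injective x} = 0 := by
  have hsub : {x : Fin n → ℝ | ¬ Function.Injective x} ⊆
      ⋃ (i : Fin n) (j : Fin n) (_ : i ≠ j),
        (LinearMap.ker ((LinearMap.proj i : (Fin n → ℝ) →ₗ[ℝ] ℝ) - LinearMap.proj j) :
          Set (Fin n → ℝ)) := by
    intro x hx
    simp only [Function.Injective, not_forall] at hx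
    obtain ⟨i, j, hxij, hij⟩ := hx
    simpa [sub_eq_zero] using ⟨i, j, hij, hxij⟩
  refine measure_mono_null hsub (measure_iUnion_null fun i => measure_iUnion_null fun j =>
    measure_iUnion_null fun hij => Measure.addHaar_submodule _ _ fun htop => ?_)
  have := htop ▸ Submodule.mem_top (x := Pi.single i (1 : ℝ))
  simp [hij.symm] at this

theorem volume_eq_sum_chamber {W : Set (Fin n → ℝ)} (hW : MeasurableSet W) :
    volume W = ∑ σ, volume (W ∩ chamber σ) := by
  have hnull : volume (⋃ σ : Equiv.Perm (Fin n), chamber σ)ᶜ = 0 := by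
    simpa [iUnion_chamber, Set.compl_ofPred] using volume_setOf_not_injective
  rw [← measure_inter_conull hnull, Set.inter_iUnion,
    measure_iUnion _ fun σ => hW.inter (measurableSet_chamber σ), tsum_fintype]
  exact fun σ τ hστ => (pairwise_disjoint_chamber hστ).mono Set.inter_subset_right
    Set.inter_subset_right

theorem orderStat_eq_comp {x : Fin n → ℝ} {σ : Equiv.Perm (Fin n)} (h : Monotone (x ∘ σ)) :
    orderStat x = x ∘ σ :=
  (Tuple.comp_sort_eq_comp_iff_monotone.mpr h).symm

def spacingsGt (s : ℝ) (c : Fin (n + 1) → ℝ) : Set (Fin n → ℝ) :=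
  {x | ∀ i, c i < slack n s x i}

theorem measurableSet_spacingsGt (s : ℝ) (c : Fin (n + 1) → ℝ) :
    MeasurableSet (spacingsGt s c) := by
  simp only [spacingsGt, Set.ofPred_forall]
  exact .iInter fun i => measurableSet_lt measurable_const (measurable_slack s i)

theorem spacingsGt_inter_chamber {s : ℝ} {c : Fin (n + 1) → ℝ} (hc : 0 ≤ c)
    (σ : Equiv.Perm (Fin n)) :
    spacingsGt s c ∩ chamber σ = {x | ∀ i, c i < gaps s (x ∘ σ) i} := by
  ext x
  refine ⟨fun ⟨hx, hσ⟩ => ?_, fun hx => ?_⟩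
  · simpa [spacingsGt, slack_eq_gaps, orderStat_eq_comp hσ.monotone] using hx
  · have hσ : x ∈ chamber σ := (strictMono_knots_iff.mp
      (strictMono_knots_iff_gaps_pos.mpr fun i => (hc i).trans_lt (hx i))).2.1
    refine ⟨?_, hσ⟩
    simpa [spacingsGt, slack_eq_gaps, orderStat_eq_comp hσ.monotone] using hx

theorem volume_setOf_lt_gaps (s : ℝ) (c : Fin (n + 1) → ℝ) (σ : Equiv.Perm (Fin n)) :
    volume {x : Fin n → ℝ | ∀ i, c i < gaps s (x ∘ σ) i} =
      volume {x : Fin n → ℝ | ∀ i, 0 < gaps (s - ∑ i, c i) (x ∘ σ) i} := by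
  have hpre : {x : Fin n → ℝ | ∀ i, c i < gaps s (x ∘ σ) i} =
      (· - cumSum c ∘ σ.symm) ⁻¹' {x | ∀ i, 0 < gaps (s - ∑ i, c i) (x ∘ σ) i} := by
    ext x
    have hcomp : (x - cumSum c ∘ σ.symm) ∘ σ = x ∘ σ - cumSum c := by
      ext
      simp
    simp [hcomp, gaps_sub, gaps_cumSum]
  have hmeas :
      MeasurableSet {x : Fin n → ℝ | ∀ i, 0 < gaps (s - ∑ i, c i) (x ∘ σ) i} := by
    simpa [spacingsGt_inter_chamber le_rfl σ] using
      (measurableSet_spacingsGt (s - ∑ i, c i) 0).inter (measurableSet_chamber σ)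
  rw [hpre,
    (measurePreserving_sub_right volume _).measure_preimage hmeas.nullMeasurableSet]

theorem volume_spacingsGt {s : ℝ} {c : Fin (n + 1) → ℝ} (hc : 0 ≤ c) :
    volume (spacingsGt s c) = volume (spacingsGt (s - ∑ i, c i) 0 : Set (Fin n → ℝ)) := by
  rw [volume_eq_sum_chamber (measurableSet_spacingsGt s c),
    volume_eq_sum_chamber (measurableSet_spacingsGt _ 0)]
  refine Finset.sum_congr rfl fun σ _ => ?_
  rw [spacingsGt_inter_chamber hc, spacingsGt_inter_chamber le_rfl, volume_setOf_lt_gaps]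
  rfl

theorem spacingsGt_zero (a : ℝ) :
    spacingsGt a 0 =
      {x : Fin n → ℝ | 0 < a ∧ Function.Injective x ∧ ∀ j, x j ∈ Set.Ioo 0 a} := by
  ext x
  simp only [spacingsGt, Pi.zero_apply, slack_eq_gaps, ← strictMono_knots_iff_gaps_pos,
    strictMono_knots_iff, orderStat, (Tuple.monotone_sort x).strictMono_iff_injective,
    EquivLike.injective_comp, Function.comp_apply, Set.mem_ofPred_eq]
  exact and_congr_right' <| and_congr_right' <|
    (Tuple.sort x).forall_congr_right (q := fun j => x j ∈ Set.Ioo 0 a)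

theorem spacingsGt_zero_ae_eq {a : ℝ} (ha : 0 < a) :
    spacingsGt a 0 =ᵐ[volume] (Set.univ.pi fun _ : Fin n => Set.Ioo 0 a) := by
  have hinj : {x : Fin n → ℝ | Function.Injective x} =ᵐ[volume] Set.univ := by
    simpa [ae_eq_univ, Set.compl_ofPred] using volume_setOf_not_injective
  have hset : spacingsGt a 0 =
      (Set.univ.pi fun _ : Fin n => Set.Ioo 0 a) ∩ {x | Function.Injective x} := by
    ext x
    simp [spacingsGt_zero, ha, and_comm]
  rw [hset]
  exact inter_ae_eq_left_of_ae_eq_univ hinj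

theorem volume_spacingsGt_zero (a : ℝ) :
    volume (spacingsGt a 0 : Set (Fin n → ℝ)) =
      if 0 < a then ENNReal.ofReal (a ^ n) else 0 := by
  split_ifs with ha
  · rw [measure_congr (spacingsGt_zero_ae_eq ha), volume_pi_pi]
    simp [Real.volume_Ioo, ENNReal.ofReal_pow ha.le]
  · simp [spacingsGt_zero, ha]

instance (s : ℝ) : IsFiniteMeasure (unif s) :=
  ⟨by simp [unif, ENNReal.mul_lt_top]⟩

instance (s : ℝ) : IsFiniteMeasure (iidUnif n s) := by
  rw [iidUnif]
  infer_instance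

theorem iidUnif_eq {s : ℝ} (hs : 0 < s) :
    iidUnif n s = ENNReal.ofReal s⁻¹ ^ n • volume.restrict (spacingsGt s 0) := by
  rw [Measure.restrict_congr_set ((spacingsGt_zero_ae_eq hs).trans Measure.pi_Ioo_ae_eq_pi_Icc),
    volume_pi, Measure.restrict_pi_pi]
  refine Measure.pi_eq fun t ht => ?_
  simp [unif, Measure.pi_pi, Finset.prod_mul_distrib]

theorem iidUnif_real_biInter_slack_gt {s d : ℝ} (hs : 0 < s) (hd : 0 ≤ d)
    (T : Finset (Fin (n + 1))) :
    (iidUnif n s).real (⋂ t ∈ T, {x | d < slack n s x t}) =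
      if #T * (d / s) < 1 then (1 - #T * (d / s)) ^ n else 0 := by
  set c : Fin (n + 1) → ℝ := fun i => if i ∈ T then d else 0
  have hc : 0 ≤ c := fun i => by by_cases hi : i ∈ T <;> simp [c, hi, hd]
  have hinter : (⋂ t ∈ T, {x | d < slack n s x t}) ∩ spacingsGt s 0 = spacingsGt s c := by
    ext x
    simp only [spacingsGt, Set.mem_inter_iff, Set.mem_iInter, Set.mem_ofPred_eq, Pi.zero_apply,
      c]
    refine ⟨fun ⟨hT, hpos⟩ i => ?_,
      fun h => ⟨fun t ht => by simpa [ht] using h t, fun i => ?_⟩⟩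
    · split_ifs with hi
      exacts [hT i hi, hpos i]
    · exact (hc i).trans_lt (h i)
  have hsum : ∑ i, c i = #T * d := by simp [c, Finset.sum_ite_mem]
  have hpos : 0 < s - #T * d ↔ #T * (d / s) < 1 := by
    rw [mul_div_assoc', div_lt_one hs, sub_pos]
  have hmeas : MeasurableSet (⋂ t ∈ T, {x : Fin n → ℝ | d < slack n s x t}) :=
    .biInter T.countable_toSet fun t _ => measurableSet_lt measurable_const (measurable_slack s t)
  rw [iidUnif_eq hs, measureReal_ennreal_smul_apply, measureReal_def,
    Measure.restrict_apply hmeas, hinter, volume_spacingsGt hc, hsum, volume_spacingsGt_zero]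
  simp only [hpos, ENNReal.toReal_pow, ENNReal.toReal_ofReal (inv_nonneg.mpr hs.le)]
  split_ifs with h
  · rw [ENNReal.toReal_ofReal (pow_nonneg (hpos.mpr h).le n), ← mul_pow]
    congr 1
    field_simp
  · simp

end Spacings

theorem prob_monitoring_general (n : ℕ) (s d : ℝ) (hd : 0 < d) (hds : d < s) :
    iidUnif n s {ω | ∀ i : Fin (n + 1), slack n s ω i ≤ d} =
      ENNReal.ofReal (1 - ∑ k ∈ Finset.Icc 1 (⌊s / d⌋₊),
        (-1 : ℝ) ^ (k - 1) * (n + 1).choose k * (1 - k * (d / s)) ^ n) := by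
  have hs : 0 < s := hd.trans hds
  have hevent :
      {ω : Fin n → ℝ | ∀ i, slack n s ω i ≤ d} = ⋂ i, {ω | d < slack n s ω i}ᶜ := by
    ext
    simp
  rw [← ofReal_measureReal, hevent, measureReal_iInter_compl _ fun i =>
      measurableSet_lt measurable_const (measurable_slack s i)]
  simp_rw [iidUnif_real_biInter_slack_gt hs hd.le, ← Finset.powerset_univ]
  rw [Finset.sum_powerset_apply_card (fun k => (-1 : ℝ) ^ k *
      if k * (d / s) < 1 then (1 - k * (d / s)) ^ n else 0), Finset.card_univ, Fintype.card_fin,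
    ← inv_div d s,
    sum_range_choose_smul_truncated_pow n (div_pos hd hs) ((div_lt_one hs).mpr hds)]

/-- Probability of monitoring: all n+1 spacings are at most d. -/
theorem prob_monitoring (n : ℕ) (s d : ℝ) (hs : 0 < s) (hd : 0 < d) (hds : d < s) :
    iidUnif n s {ω | ∀ i : Fin (n + 1), slack n s ω i ≤ d} =
      ENNReal.ofReal (1 - ∑ k ∈ Finset.Icc 1 (⌊s / d⌋₊),
        (-1 : ℝ) ^ (k - 1) * (n + 1).choose k * (1 - k * (d / s)) ^ n) :=
  prob_monitoring_general n s d hd hds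
end

section
/- Let $b > 0$, let $a_1,\dots,a_n > 0$, let $T' = \{\mathbf{s} \in \mathbb{R}_+^n : \sum_{i=1}^n s_i \le b\}$ and $H = \prod_{i=1}^n [0, a_i]$. Then the Lebesgue volume of $T' \cap H$ equals $\frac{1}{n!} \sum_{\mathbf{v} \in \{0,1\}^n} (-1)^{\mathbf{1}^T\mathbf{v}} \left(\max(b - \mathbf{a}^T\mathbf{v}, 0)\right)^n$, where $\mathbf{a} = (a_1,\dots,a_n)$. -/
/-!
Inclusion–exclusion over the facets `{x i > a i}` of the box, applied to the Lebesgue measure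
restricted to the simplex `{x ≥ 0, ∑ x ≤ b}`, writes the volume as an alternating sum of the
volumes of `{x ∈ T' : x i > a i for i ∈ t}`. Up to a null set, such a piece is the translate by
`∑ i ∈ t, a i • eᵢ` of the corner simplex of size `b - ∑ i ∈ t, a i`, whose volume is
`(b - ∑ i ∈ t, a i)ⁿ / n!` when it is nonnegative and `0` otherwise.
-/

open MeasureTheory Finset Nat

theorem inclusion_exclusion_measureReal_iInter_compl {α ι : Type*} [MeasurableSpace α]
    [Fintype ι] (μ : Measure α) [IsFiniteMeasure μ] {B : ι → Set α}
    (hB : ∀ i, MeasurableSet (B i)) :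
    μ.real (⋂ i, (B i)ᶜ) = ∑ t : Finset ι, (-1) ^ #t * μ.real (⋂ i ∈ t, B i) := by
  classical
  have hpoint : ∀ x, (⋂ i, (B i)ᶜ).indicator (1 : α → ℝ) x =
      ∑ t : Finset ι, (-1) ^ #t * (⋂ i ∈ t, B i).indicator 1 x := by
    intro x
    calc (⋂ i, (B i)ᶜ).indicator (1 : α → ℝ) x
        = ∏ i, (1 - (B i).indicator 1 x) := by
          simpa [Set.indicator_compl] using
            (prod_indicator_apply univ (fun i => (B i)ᶜ) (fun _ => (1 : α → ℝ)) x).symm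
      _ = _ := by
          simp [prod_sub, prod_indicator_apply, powerset_univ]
  have hmeas : ∀ t : Finset ι, MeasurableSet (⋂ i ∈ t, B i) := fun t =>
    t.measurableSet_biInter fun i _ => hB i
  rw [← integral_indicator_one (MeasurableSet.iInter fun i => (hB i).compl),
    integral_congr_ae (.of_forall hpoint), integral_finsetSum]
  · simp only [integral_const_mul, integral_indicator_one (hmeas _)]
  · exact fun t _ => ((integrable_const 1).indicator (hmeas t)).const_mul _

theorem sum_finset_eq_sum_bool_fun {ι M : Type*} [Fintype ι] [DecidableEq ι] [AddCommMonoid M]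
    (f : Finset ι → M) :
    ∑ t : Finset ι, f t = ∑ v : ι → Bool, f (univ.filter fun i => v i = true) := by
  let e : (ι → Bool) ≃ Finset ι :=
    { toFun := fun v => univ.filter fun i => v i = true
      invFun := fun t i => decide (i ∈ t)
      left_inv := fun v => by ext i; simp
      right_inv := fun t => by ext i; simp }
  exact (Fintype.sum_equiv e _ _ fun _ => rfl).symm

def cornerSimplex (n : ℕ) (c : ℝ) : Set (Fin n → ℝ) :=
  {x | (∀ i, 0 ≤ x i) ∧ ∑ i, x i ≤ c}

theorem measurableSet_cornerSimplex (n : ℕ) (c : ℝ) : MeasurableSet (cornerSimplex n c) := by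
  simp only [cornerSimplex, Set.ofPred_and, Set.ofPred_forall]
  exact (MeasurableSet.iInter fun i => measurableSet_le measurable_const (measurable_pi_apply i))
    |>.inter (measurableSet_le (measurable_sum _ fun i _ => measurable_pi_apply i) measurable_const)

section cornerSimplex

variable {c : ℝ}

theorem cornerSimplex_eq_empty {n : ℕ} (hc : c < 0) : cornerSimplex n c = ∅ :=
  Set.eq_empty_of_forall_notMem fun _ ⟨hx, hsum⟩ =>
    (hsum.trans_lt hc).not_ge (sum_nonneg fun i _ => hx i)

theorem cons_mem_cornerSimplex {n : ℕ} {t : ℝ} {y : Fin n → ℝ} :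
    Fin.cons t y ∈ cornerSimplex (n + 1) c ↔ 0 ≤ t ∧ y ∈ cornerSimplex n (c - t) := by
  simp only [cornerSimplex, Set.mem_ofPred_eq, Fin.forall_fin_succ, Fin.cons_zero, Fin.cons_succ,
    Fin.sum_cons, le_sub_iff_add_le', and_assoc]

theorem lintegral_sub_pow_div_factorial (n : ℕ) (hc : 0 ≤ c) :
    ∫⁻ t in Set.Icc 0 c, ENNReal.ofReal ((c - t) ^ n / n !) =
      ENNReal.ofReal (c ^ (n + 1) / (n + 1)!) := by
  rw [← ofReal_integral_eq_lintegral_ofReal]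
  · congr 1
    rw [integral_Icc_eq_integral_Ioc, ← intervalIntegral.integral_of_le hc,
      intervalIntegral.integral_div, intervalIntegral.integral_comp_sub_left (· ^ n) c]
    simp [integral_pow, Nat.factorial_succ, div_div]
  · exact (((continuous_const.sub continuous_id).pow n).div_const _).integrableOn_Icc
  · filter_upwards [ae_restrict_mem measurableSet_Icc] with t ht
    have : 0 ≤ c - t := sub_nonneg.mpr ht.2
    positivity

theorem volume_cornerSimplex (n : ℕ) (hc : 0 ≤ c) :
    volume (cornerSimplex n c) = ENNReal.ofReal (c ^ n / n !) := by
  induction n generalizing c with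
  | zero =>
    have : cornerSimplex 0 c = Set.univ := by ext x; simp [cornerSimplex, hc]
    simp [this, volume_pi]
  | succ n ih =>
    have hslice : ∀ t, volume {y : Fin n → ℝ | Fin.cons t y ∈ cornerSimplex (n + 1) c} =
        (Set.Icc 0 c).indicator (fun t => ENNReal.ofReal ((c - t) ^ n / n !)) t := by
      intro t
      simp only [cons_mem_cornerSimplex]
      by_cases ht : t ∈ Set.Icc 0 c
      · simp [Set.indicator_of_mem ht, ht.1, ← ih (sub_nonneg.2 ht.2)]
      · rw [Set.indicator_of_notMem ht]
        rcases not_and_or.1 ht with ht | ht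
        · simp [ht]
        · simp [cornerSimplex_eq_empty (sub_neg.2 (not_le.1 ht))]
    let e := (MeasurableEquiv.piFinSuccAbove (fun _ : Fin (n + 1) => ℝ) 0).symm
    have hpre : ∀ t : ℝ, Prod.mk t ⁻¹' (e ⁻¹' cornerSimplex (n + 1) c) =
        {y | Fin.cons t y ∈ cornerSimplex (n + 1) c} := by
      intro t
      simp only [e, MeasurableEquiv.piFinSuccAbove_symm_apply, Fin.insertNthEquiv_zero]
      rfl
    have hS := measurableSet_cornerSimplex (n + 1) c
    rw [← (volume_preserving_piFinSuccAbove (fun _ => ℝ) 0).symm.measure_preimage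
      hS.nullMeasurableSet, Measure.volume_eq_prod, Measure.prod_apply (hS.preimage e.measurable)]
    simp only [hpre, hslice]
    rw [lintegral_indicator measurableSet_Icc, lintegral_sub_pow_div_factorial n hc]

-- `max c 0 ^ 0 = 1` even when `c < 0` and the set is empty.
theorem volume_cornerSimplex_eq_max {n : ℕ} (h : 0 ≤ c ∨ n ≠ 0) :
    volume (cornerSimplex n c) = ENNReal.ofReal (max c 0 ^ n / n !) := by
  rcases le_or_gt 0 c with hc | hc
  · rw [max_eq_left hc, volume_cornerSimplex n hc]
  · rw [cornerSimplex_eq_empty hc, max_eq_right hc.le, zero_pow (h.resolve_left hc.not_ge),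
      zero_div, ENNReal.ofReal_zero, measure_empty]

theorem preimage_add_biInter_le_inter_cornerSimplex {n : ℕ} {t : Finset (Fin n)}
    {a : Fin n → ℝ} (ha : ∀ i ∈ t, 0 ≤ a i) (b : ℝ) :
    (fun y => (fun i => if i ∈ t then a i else 0) + y) ⁻¹'
        ((⋂ i ∈ t, {x | a i ≤ x i}) ∩ cornerSimplex n b) =
      cornerSimplex n (b - ∑ i ∈ t, a i) := by
  ext y
  have hcoord : ∀ i, ((i ∈ t → a i ≤ (if i ∈ t then a i else 0) + y i) ∧
      0 ≤ (if i ∈ t then a i else 0) + y i) ↔ 0 ≤ y i := by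
    intro i
    by_cases hi : i ∈ t
    · simpa [hi] using fun hy => add_nonneg (ha i hi) hy
    · simp [hi]
  simp only [cornerSimplex, Set.mem_preimage, Set.mem_inter_iff, Set.mem_iInter,
    Set.mem_ofPred_eq, Pi.add_apply, sum_add_distrib, sum_ite_mem, univ_inter, ← and_assoc,
    ← forall_and, hcoord, le_sub_iff_add_le']

theorem volume_biInter_lt_inter_cornerSimplex {n : ℕ} {t : Finset (Fin n)} {a : Fin n → ℝ}
    (ha : ∀ i ∈ t, 0 ≤ a i) (b : ℝ) :
    volume ((⋂ i ∈ t, {x | a i < x i}) ∩ cornerSimplex n b) =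
      volume (cornerSimplex n (b - ∑ i ∈ t, a i)) := by
  rw [← preimage_add_biInter_le_inter_cornerSimplex ha, measure_preimage_add]
  refine measure_congr (Filter.eventuallyEq_set.2 ?_)
  filter_upwards [ae_all_iff.2 fun i => Measure.ae_eval_ne _ i (a i)] with x hx
  simp only [Set.mem_inter_iff, Set.mem_iInter, Set.mem_ofPred_eq,
    fun i => (Ne.symm (hx i)).le_iff_lt]

end cornerSimplex

/-- Volume of the intersection of the corner simplex {s ≥ 0, ∑ sᵢ ≤ b} with the
hypercuboid ∏ [0, aᵢ], via inclusion-exclusion over vertices. -/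
theorem simplex_hypercuboid_volume (n : ℕ) (b : ℝ) (hb : 0 < b)
    (a : Fin n → ℝ) (ha : ∀ i, 0 < a i) :
    volume {x : Fin n → ℝ |
        ((∀ i, 0 ≤ x i) ∧ (∑ i, x i) ≤ b) ∧ ∀ i, x i ∈ Set.Icc 0 (a i)} =
      ENNReal.ofReal ((n ! : ℝ)⁻¹ * ∑ v : Fin n → Bool,
        (-1 : ℝ) ^ (Finset.univ.filter fun i => v i = true).card *
          max (b - ∑ i, (if v i then a i else 0)) 0 ^ n) := by
  classical
  set μ := volume.restrict (cornerSimplex n b)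
  have : IsFiniteMeasure μ := isFiniteMeasure_restrict.2 <| by
    rw [volume_cornerSimplex n hb.le]
    exact ENNReal.ofReal_ne_top
  have hset : {x : Fin n → ℝ |
      ((∀ i, 0 ≤ x i) ∧ (∑ i, x i) ≤ b) ∧ ∀ i, x i ∈ Set.Icc 0 (a i)} =
        (⋂ i, {x | a i < x i}ᶜ) ∩ cornerSimplex n b := by
    ext x
    simp only [cornerSimplex, Set.mem_Icc, Set.mem_inter_iff, Set.mem_iInter, Set.mem_compl_iff,
      Set.mem_ofPred_eq, not_lt, forall_and]
    tauto
  have hterm : ∀ t : Finset (Fin n),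
      μ.real (⋂ i ∈ t, {x | a i < x i}) = max (b - ∑ i ∈ t, a i) 0 ^ n / n ! := by
    intro t
    have hdeg : 0 ≤ b - ∑ i ∈ t, a i ∨ n ≠ 0 := by
      rcases eq_or_ne n 0 with rfl | hn
      · simp [t.eq_empty_of_isEmpty, hb.le]
      · exact .inr hn
    rw [measureReal_restrict_apply' (measurableSet_cornerSimplex n b), measureReal_def,
      volume_biInter_lt_inter_cornerSimplex (fun i _ => (ha i).le),
      volume_cornerSimplex_eq_max hdeg, ENNReal.toReal_ofReal (by positivity)]
  rw [hset, ← Measure.restrict_apply' (measurableSet_cornerSimplex n b), ← ofReal_measureReal,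
    inclusion_exclusion_measureReal_iInter_compl _
      (fun i => measurableSet_lt measurable_const (measurable_pi_apply i)),
    sum_finset_eq_sum_bool_fun, mul_sum]
  congr 1
  refine sum_congr rfl fun v _ => ?_
  rw [hterm, sum_filter]
  ring
end

section
/- Let $b > 0$ and $a > 0$, and let $T = \{\mathbf{s} \in \mathbb{R}_+^n : \sum s_i \le b\}$, $H = [0,a]^n$. Then $\mathrm{Vol}(T \cap H) = \frac{1}{n!}\sum_{k=0}^{n} (-1)^k \binom{n}{k} \left(\max(b - ka, 0)\right)^n$. -/
open MeasureTheory Finset Nat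

/-! Slicing along the first coordinate gives `V (n + 1) b = ∫ t in 0..a, V n (b - t)`, where
`V n b` is the volume of `{x ∈ [0, a]ⁿ | ∑ xᵢ ≤ b}`. For `n ≥ 1` the map
`u ↦ max u 0 ^ (n + 1) / (n + 1)` is an antiderivative of `u ↦ max u 0 ^ n`, so this recursion
sends each truncated power `max (b - k a) 0 ^ n / n!` to the difference of the next ones at
`b - k a` and `b - (k + 1) a`; Pascal's rule then reassembles the alternating binomial sum one
level up. -/

lemma hasDerivAt_max_zero_pow_succ {n : ℕ} (hn : n ≠ 0) (x : ℝ) :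
    HasDerivAt (fun u : ℝ => max u 0 ^ (n + 1)) ((n + 1) * max x 0 ^ n) x := by
  have hneg : ∀ x ≤ 0, HasDerivWithinAt (fun u : ℝ => max u 0 ^ (n + 1))
      ((n + 1) * max x 0 ^ n) (Set.Iic 0) x := fun x hx => by
    refine (hasDerivWithinAt_const x _ 0).congr_of_mem (fun u hu => ?_) hx |>.congr_deriv ?_
    · simp [max_eq_right (Set.mem_Iic.mp hu)]
    · simp [max_eq_right hx, hn]
  have hpos : ∀ x ≥ 0, HasDerivWithinAt (fun u : ℝ => max u 0 ^ (n + 1))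
      ((n + 1) * max x 0 ^ n) (Set.Ici 0) x := fun x hx => by
    refine (hasDerivAt_pow (n + 1) x).hasDerivWithinAt.congr_of_mem (fun u hu => ?_) hx
      |>.congr_deriv ?_
    · simp [max_eq_left (Set.mem_Ici.mp hu)]
    · simp [max_eq_left hx]
  rcases lt_trichotomy x 0 with hx | rfl | hx
  · exact (hneg x hx.le).hasDerivAt (Iic_mem_nhds hx)
  · simpa [Set.Iic_union_Ici] using (hneg 0 le_rfl).union (hpos 0 le_rfl)
  · exact (hpos x hx.le).hasDerivAt (Ici_mem_nhds hx)

lemma integral_max_sub_zero_pow {n : ℕ} (hn : n ≠ 0) (c a : ℝ) :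
    ∫ t in (0 : ℝ)..a, max (c - t) 0 ^ n =
      (max c 0 ^ (n + 1) - max (c - a) 0 ^ (n + 1)) / (n + 1) := by
  have hderiv : ∀ t ∈ Set.uIcc 0 a, HasDerivAt (fun t => -max (c - t) 0 ^ (n + 1) / (n + 1))
      (max (c - t) 0 ^ n) t := fun t _ => by
    have h := ((hasDerivAt_max_zero_pow_succ hn (c - t)).comp t
      ((hasDerivAt_id t).const_sub c)).neg.div_const ((n : ℝ) + 1)
    rwa [mul_neg_one, neg_neg, mul_div_cancel_left₀ _ (by positivity)] at h
  rw [intervalIntegral.integral_eq_sub_of_hasDerivAt hderiv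
    (Continuous.intervalIntegrable (by fun_prop) _ _), sub_zero]
  ring

lemma sum_alternating_choose_succ (n : ℕ) (g : ℕ → ℝ) :
    ∑ k ∈ range (n + 2), (-1 : ℝ) ^ k * (n + 1).choose k * g k =
      ∑ k ∈ range (n + 1), (-1 : ℝ) ^ k * n.choose k * (g k - g (k + 1)) := by
  have := Finset.sum_choose_succ_mul (fun k _ => (-1 : ℝ) ^ k * g k) n
  simp only [mul_sub, Finset.sum_sub_distrib]
  convert this using 1
  · exact Finset.sum_congr rfl fun k _ => by ring
  · rw [sub_eq_add_neg, ← Finset.sum_neg_distrib]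
    congr 1 <;> exact Finset.sum_congr rfl fun k _ => by ring

def simplexInterCube (n : ℕ) (b a : ℝ) : Set (Fin n → ℝ) :=
  {x | ((∀ i, 0 ≤ x i) ∧ (∑ i, x i) ≤ b) ∧ ∀ i, x i ∈ Set.Icc 0 a}

lemma measurableSet_simplexInterCube (n : ℕ) (b a : ℝ) :
    MeasurableSet (simplexInterCube n b a) := by
  simp only [simplexInterCube, Set.ofPred_and, Set.ofPred_forall]
  refine .inter (.inter ?_ ?_) ?_
  · exact .iInter fun i => measurableSet_le measurable_const (measurable_pi_apply i)
  · exact measurableSet_le (by fun_prop) measurable_const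
  · exact .iInter fun i => measurable_pi_apply i measurableSet_Icc

lemma volume_simplexInterCube_zero (b a : ℝ) :
    volume (simplexInterCube 0 b a) = if 0 ≤ b then 1 else 0 := by
  split_ifs with hb
  · have : simplexInterCube 0 b a = Set.univ := by simp [simplexInterCube, hb]
    simp [this, volume_pi]
  · have : simplexInterCube 0 b a = ∅ := by simp [simplexInterCube, hb]
    simp [this]

lemma cons_preimage_simplexInterCube (n : ℕ) (b a t : ℝ) :
    Fin.cons t ⁻¹' simplexInterCube (n + 1) b a =
      {_y | t ∈ Set.Icc 0 a} ∩ simplexInterCube n (b - t) a := by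
  ext y
  simp only [simplexInterCube, Set.mem_preimage, Set.mem_ofPred_eq, Set.mem_inter_iff,
    Fin.forall_fin_succ, Fin.cons_zero, Fin.cons_succ, Fin.sum_univ_succ, Set.mem_Icc]
  constructor
  · rintro ⟨⟨⟨_, hy⟩, hsum⟩, ht, hya⟩
    exact ⟨ht, ⟨hy, by linarith⟩, hya⟩
  · rintro ⟨ht, ⟨hy, hsum⟩, hya⟩
    exact ⟨⟨⟨ht.1, hy⟩, by linarith⟩, ht, hya⟩

lemma volume_simplexInterCube_succ (n : ℕ) (b a : ℝ) :
    volume (simplexInterCube (n + 1) b a) =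
      ∫⁻ t in Set.Icc 0 a, volume (simplexInterCube n (b - t) a) := by
  let e := MeasurableEquiv.piFinSuccAbove (fun _ : Fin (n + 1) => ℝ) 0
  have he : ∀ p : ℝ × (Fin n → ℝ), e.symm p = Fin.cons p.1 p.2 := fun p => by
    simp [e, MeasurableEquiv.piFinSuccAbove_symm_apply, Fin.consEquiv]
  rw [← ((volume_preserving_piFinSuccAbove (fun _ : Fin (n + 1) => ℝ) 0).symm
    e).measure_preimage_equiv, Measure.volume_eq_prod, Measure.prod_apply
    (e.symm.measurable (measurableSet_simplexInterCube _ _ _)),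
    ← lintegral_indicator measurableSet_Icc]
  refine lintegral_congr fun t => ?_
  have hslice : Prod.mk t ⁻¹' (e.symm ⁻¹' simplexInterCube (n + 1) b a) =
      {_y | t ∈ Set.Icc 0 a} ∩ simplexInterCube n (b - t) a := by
    rw [← cons_preimage_simplexInterCube]
    ext y
    simp [he]
  by_cases ht : t ∈ Set.Icc 0 a <;> simp [hslice, ht]

-- Since `0 ^ 0 = 1`, at `n = 0` this is `1` even for `b < 0`, where the volume is `0`.
noncomputable def simplexInterCubeVolume (n : ℕ) (b a : ℝ) : ℝ :=
  (n ! : ℝ)⁻¹ * ∑ k ∈ range (n + 1), (-1 : ℝ) ^ k * n.choose k * max (b - k * a) 0 ^ n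

lemma continuous_simplexInterCubeVolume (n : ℕ) (a : ℝ) :
    Continuous fun b => simplexInterCubeVolume n b a := by
  unfold simplexInterCubeVolume
  fun_prop

lemma simplexInterCubeVolume_one (b a : ℝ) :
    simplexInterCubeVolume 1 b a = max b 0 - max (b - a) 0 := by
  simp [simplexInterCubeVolume, Finset.sum_range_succ, sub_eq_add_neg]

lemma integral_simplexInterCubeVolume {n : ℕ} (hn : n ≠ 0) (b a : ℝ) :
    ∫ t in (0 : ℝ)..a, simplexInterCubeVolume n (b - t) a =
      simplexInterCubeVolume (n + 1) b a := by
  have hterm : ∀ k : ℕ, ∫ t in (0 : ℝ)..a, max (b - t - k * a) 0 ^ n =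
      (max (b - k * a) 0 ^ (n + 1) - max (b - (k + 1 : ℕ) * a) 0 ^ (n + 1)) / (n + 1) := by
    intro k
    simp_rw [sub_right_comm b _ ((k : ℝ) * a), integral_max_sub_zero_pow hn]
    push_cast
    ring_nf
  simp only [simplexInterCubeVolume, intervalIntegral.integral_const_mul]
  rw [intervalIntegral.integral_finsetSum fun k _ => (Continuous.intervalIntegrable
    (by fun_prop) _ _)]
  simp only [intervalIntegral.integral_const_mul, hterm, sum_alternating_choose_succ n
    (fun k => max (b - k * a) 0 ^ (n + 1)), Nat.factorial_succ, Finset.mul_sum]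
  refine Finset.sum_congr rfl fun k _ => ?_
  push_cast
  field_simp

lemma simplexInterCubeVolume_nonneg {n : ℕ} (hn : n ≠ 0) (b : ℝ) {a : ℝ} (ha : 0 ≤ a) :
    0 ≤ simplexInterCubeVolume n b a := by
  induction n, Nat.one_le_iff_ne_zero.mpr hn using Nat.le_induction generalizing b with
  | base =>
    rw [simplexInterCubeVolume_one, sub_nonneg]
    exact max_le_max (by linarith) le_rfl
  | succ n hn1 ih =>
    rw [← integral_simplexInterCubeVolume (by omega)]
    exact intervalIntegral.integral_nonneg ha fun t _ => ih (by omega) (b - t)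

lemma volume_simplexInterCube_one (b : ℝ) {a : ℝ} (ha : 0 ≤ a) :
    volume (simplexInterCube 1 b a) = ENNReal.ofReal (simplexInterCubeVolume 1 b a) := by
  simp only [volume_simplexInterCube_succ, volume_simplexInterCube_zero, sub_nonneg]
  have hind : (fun t => if t ≤ b then (1 : ENNReal) else 0) = (Set.Iic b).indicator 1 := by
    ext t
    simp [Set.indicator_apply]
  have hslab : Set.Iic b ∩ Set.Icc 0 a = Set.Icc 0 (min b a) := by
    ext t
    simp only [Set.mem_inter_iff, Set.mem_Iic, Set.mem_Icc, le_min_iff]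
    tauto
  rw [hind, lintegral_indicator_one measurableSet_Iic, Measure.restrict_apply measurableSet_Iic,
    hslab, Real.volume_Icc, simplexInterCubeVolume_one]
  rcases le_total b 0 with hb | hb
  · rw [ENNReal.ofReal_of_nonpos (by simp [hb]), max_eq_right hb, max_eq_right (by linarith),
      sub_self, ENNReal.ofReal_zero]
  rcases le_total b a with hba | hba
  · rw [min_eq_left hba, max_eq_left hb, max_eq_right (by linarith), sub_zero]
  · rw [min_eq_right hba, max_eq_left hb, max_eq_left (by linarith), sub_zero, sub_sub_cancel]

lemma volume_simplexInterCube {n : ℕ} (hn : n ≠ 0) (b : ℝ) {a : ℝ} (ha : 0 ≤ a) :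
    volume (simplexInterCube n b a) = ENNReal.ofReal (simplexInterCubeVolume n b a) := by
  induction n, Nat.one_le_iff_ne_zero.mpr hn using Nat.le_induction generalizing b with
  | base => exact volume_simplexInterCube_one b ha
  | succ n hn1 ih =>
    have hn0 : n ≠ 0 := by omega
    simp only [volume_simplexInterCube_succ, ih hn0]
    rw [← ofReal_integral_eq_lintegral_ofReal, integral_Icc_eq_integral_Ioc,
      ← intervalIntegral.integral_of_le ha, integral_simplexInterCubeVolume hn0]
    · exact ((continuous_simplexInterCubeVolume n a).comp
        (continuous_const.sub continuous_id)).integrableOn_Icc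
    · exact .of_forall fun t => simplexInterCubeVolume_nonneg hn0 (b - t) ha

/-- Volume of the intersection of the corner simplex with the cube [0,a]^n. -/
theorem simplex_cube_volume (n : ℕ) (b a : ℝ) (hb : 0 < b) (ha : 0 < a) :
    volume {x : Fin n → ℝ |
        ((∀ i, 0 ≤ x i) ∧ (∑ i, x i) ≤ b) ∧ ∀ i, x i ∈ Set.Icc 0 a} =
      ENNReal.ofReal ((n ! : ℝ)⁻¹ * ∑ k ∈ Finset.range (n + 1),
        (-1 : ℝ) ^ k * n.choose k * max (b - k * a) 0 ^ n) := by
  rcases eq_or_ne n 0 with rfl | hn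
  · exact (volume_simplexInterCube_zero b a).trans (by simp [hb.le])
  · exact volume_simplexInterCube hn b ha.le
end
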